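/- For σ ∈ ℂ with Re σ sufficiently large (e.g. 2 Re σ > n + 2), the integral T₂(σ) = ∫₀^∞ ∫_{ℝⁿ} u^{2σ−n} / ((u² + |v|²)^σ (u² + |e₁ − v|²)^σ) dv du converges absolutely. -/

import Mathlib

open MeasureTheory Set Complex

/-!
Where `|e₁ - v| ≥ 1/2` the second factor of the denominator is at least `(u² + 1/4)^σ`, and
elsewhere `|v| ≥ 1/2` and the same holds for the first factor. So the integrand is dominated by
`u^{2a-n} (u² + 1/4)^{-a} (u² + |v - w|²)^{-a}` with `w ∈ {0, e₁}` and `a = Re σ`. By scaling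
`v = u v'`, the `v`-integral of this majorant is `C (u² + 1/4)^{-a}` with
`C = ∫ (1 + |v'|²)^{-a} dv' < ∞` since `2a > n`, and that is integrable in `u` since `2a > 1`.
-/

open Module

lemma rpow_neg_mul_rpow_neg_le {x y c a : ℝ} (hc : 0 < c) (hx : 0 ≤ x) (hy : 0 ≤ y) (ha : 0 ≤ a)
    (h : c ≤ x ∨ c ≤ y) : x ^ (-a) * y ^ (-a) ≤ c ^ (-a) * x ^ (-a) + c ^ (-a) * y ^ (-a) := by
  have := Real.rpow_nonneg hx (-a)
  have := Real.rpow_nonneg hy (-a)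
  have := Real.rpow_nonneg hc.le (-a)
  rcases h with h | h <;> nlinarith [Real.rpow_le_rpow_of_nonpos hc h (neg_nonpos.2 ha)]

section

variable {E : Type*} [NormedAddCommGroup E] [NormedSpace ℝ E]

lemma rpow_neg_sq_add_norm_sq_eq {u : ℝ} (hu : 0 < u) (a : ℝ) (v : E) :
    (u ^ 2 + ‖v‖ ^ 2) ^ (-a) = u ^ (-2 * a) * (1 + ‖u⁻¹ • v‖ ^ 2) ^ (-(2 * a) / 2) := by
  have hsplit : u ^ 2 + ‖v‖ ^ 2 = u ^ 2 * (1 + ‖u⁻¹ • v‖ ^ 2) := by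
    rw [norm_smul, norm_inv, Real.norm_of_nonneg hu.le]
    field_simp
  rw [hsplit, Real.mul_rpow (by positivity) (by positivity), ← Real.rpow_natCast,
    ← Real.rpow_mul hu.le]
  congr 2 <;> ring

noncomputable def kernelMajorant (a r : ℝ) (w : E) (p : ℝ × E) : ℝ :=
  p.1 ^ (2 * a - finrank ℝ E) * (p.1 ^ 2 + r ^ 2) ^ (-a) * (p.1 ^ 2 + ‖p.2 - w‖ ^ 2) ^ (-a)

lemma norm_integrand_le_kernelMajorant {e : E} (he : ‖e‖ = 1) {s σ : ℂ}
    (hs : s.re = 2 * σ.re - finrank ℝ E) (hσ : 0 ≤ σ.re) {u : ℝ} (hu : 0 < u) (v : E) :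
    ‖(u : ℂ) ^ s / (((u ^ 2 + ‖v‖ ^ 2 : ℝ) : ℂ) ^ σ * ((u ^ 2 + ‖e - v‖ ^ 2 : ℝ) : ℂ) ^ σ)‖ ≤
      kernelMajorant σ.re (1 / 2) 0 (u, v) + kernelMajorant σ.re (1 / 2) e (u, v) := by
  have hX : 0 < u ^ 2 + ‖v‖ ^ 2 := by positivity
  have hY : 0 < u ^ 2 + ‖e - v‖ ^ 2 := by positivity
  rw [norm_div, norm_mul, norm_cpow_eq_rpow_re_of_pos hu, norm_cpow_eq_rpow_re_of_pos hX,
    norm_cpow_eq_rpow_re_of_pos hY, div_eq_mul_inv, mul_inv, ← Real.rpow_neg hX.le,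
    ← Real.rpow_neg hY.le, hs]
  simp only [kernelMajorant, sub_zero, norm_sub_rev v e]
  have hhalf : 1 / 2 ≤ ‖v‖ ∨ 1 / 2 ≤ ‖e - v‖ := by
    have := norm_add_le v (e - v)
    rw [add_sub_cancel, he] at this
    by_contra! h
    linarith
  have hc : u ^ 2 + (1 / 2) ^ 2 ≤ u ^ 2 + ‖v‖ ^ 2 ∨
      u ^ 2 + (1 / 2) ^ 2 ≤ u ^ 2 + ‖e - v‖ ^ 2 := by
    rcases hhalf with h | h
    · exact .inl (by gcongr)
    · exact .inr (by gcongr)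
  have := rpow_neg_mul_rpow_neg_le (by positivity) hX.le hY.le hσ hc
  have := Real.rpow_nonneg hu.le (2 * σ.re - finrank ℝ E)
  nlinarith

variable [FiniteDimensional ℝ E] [MeasurableSpace E] [BorelSpace E] (μ : Measure E)
  [μ.IsAddHaarMeasure]

lemma integrable_rpow_neg_sq_add_norm_sq {u : ℝ} (hu : 0 < u) {a : ℝ}
    (ha : (finrank ℝ E : ℝ) < 2 * a) :
    Integrable (fun v : E => (u ^ 2 + ‖v‖ ^ 2) ^ (-a)) μ := by
  simp_rw [rpow_neg_sq_add_norm_sq_eq hu]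
  exact ((integrable_rpow_neg_one_add_norm_sq ha).comp_smul (inv_ne_zero hu.ne')).const_mul _

lemma integral_rpow_neg_sq_add_norm_sq {u : ℝ} (hu : 0 < u) (a : ℝ) :
    ∫ v : E, (u ^ 2 + ‖v‖ ^ 2) ^ (-a) ∂μ =
      u ^ ((finrank ℝ E : ℝ) - 2 * a) * ∫ v : E, (1 + ‖v‖ ^ 2) ^ (-(2 * a) / 2) ∂μ := by
  simp_rw [rpow_neg_sq_add_norm_sq_eq hu]
  rw [integral_const_mul,
    Measure.integral_comp_inv_smul_of_nonneg μ (fun v : E => (1 + ‖v‖ ^ 2) ^ (-(2 * a) / 2)) hu.le,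
    smul_eq_mul, ← mul_assoc, ← Real.rpow_natCast, ← Real.rpow_add hu]
  ring_nf

lemma integrable_kernelMajorant {a r : ℝ} (ha : (finrank ℝ E : ℝ) < 2 * a) (ha₁ : 1 < 2 * a)
    (hr : 0 < r) (w : E) :
    Integrable (kernelMajorant a r w) ((volume.restrict (Ioi 0)).prod μ) := by
  have hmeas : AEStronglyMeasurable (kernelMajorant a r w) ((volume.restrict (Ioi 0)).prod μ) := by
    unfold kernelMajorant; fun_prop
  refine (integrable_prod_iff hmeas).2 ⟨?_, ?_⟩
  · filter_upwards [ae_restrict_mem measurableSet_Ioi] with u hu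
    simp only [kernelMajorant]
    exact ((integrable_rpow_neg_sq_add_norm_sq μ hu ha).comp_sub_right w).const_mul _
  · set K := ∫ v : E, (1 + ‖v‖ ^ 2) ^ (-(2 * a) / 2) ∂μ
    have hslice : ∀ u ∈ Ioi (0 : ℝ),
        ∫ v, ‖kernelMajorant a r w (u, v)‖ ∂μ = K * (r ^ 2 + ‖u‖ ^ 2) ^ (-a) := by
      intro u hu
      have hu : (0 : ℝ) < u := hu
      have hnorm : ∀ v, ‖kernelMajorant a r w (u, v)‖ = kernelMajorant a r w (u, v) :=
        fun v => Real.norm_of_nonneg (by unfold kernelMajorant; positivity)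
      simp_rw [hnorm, kernelMajorant]
      rw [integral_const_mul, integral_sub_right_eq_self (fun v => (u ^ 2 + ‖v‖ ^ 2) ^ (-a)),
        integral_rpow_neg_sq_add_norm_sq μ hu, Real.norm_eq_abs, sq_abs, add_comm (r ^ 2)]
      have : u ^ (2 * a - finrank ℝ E) * u ^ ((finrank ℝ E : ℝ) - 2 * a) = 1 := by
        rw [← Real.rpow_add hu]; simp
      linear_combination (K * (u ^ 2 + r ^ 2) ^ (-a)) * this
    refine Integrable.congr ?_
      ((ae_restrict_mem measurableSet_Ioi).mono fun u hu => (hslice u hu).symm)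
    exact ((integrable_rpow_neg_sq_add_norm_sq volume hr (by simpa using ha₁)).const_mul K).restrict

end

/-- Absolute convergence of the model integral `T₂(σ)` for `2 Re σ > n + 2`. -/
theorem stmt7 (n : ℕ) (hn : 1 ≤ n) (σ : ℂ) (hσ : (n : ℝ) + 2 < 2 * σ.re) :
    IntegrableOn
      (fun p : ℝ × EuclideanSpace ℝ (Fin n) =>
        (p.1 : ℂ) ^ (2 * σ - (n : ℂ)) /
          (((p.1 ^ 2 + ‖p.2‖ ^ 2 : ℝ) : ℂ) ^ σ *
            ((p.1 ^ 2 + ‖(EuclideanSpace.single (⟨0, by omega⟩ : Fin n) (1 : ℝ)) - p.2‖ ^ 2 : ℝ) : ℂ) ^ σ))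
      (Ioi (0 : ℝ) ×ˢ (univ : Set (EuclideanSpace ℝ (Fin n)))) := by
  set e := EuclideanSpace.single (⟨0, by omega⟩ : Fin n) (1 : ℝ)
  have he : ‖e‖ = 1 := by simp [e]
  have hdim : finrank ℝ (EuclideanSpace ℝ (Fin n)) = n := finrank_euclideanSpace_fin
  have hn' : (1 : ℝ) ≤ n := by exact_mod_cast hn
  have hmaj : Integrable
      (fun p => kernelMajorant σ.re (1 / 2) 0 p + kernelMajorant σ.re (1 / 2) e p)
      (volume.restrict (Ioi (0 : ℝ) ×ˢ (univ : Set (EuclideanSpace ℝ (Fin n))))) := by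
    rw [Measure.volume_eq_prod, ← Measure.prod_restrict, Measure.restrict_univ]
    have ha : (finrank ℝ (EuclideanSpace ℝ (Fin n)) : ℝ) < 2 * σ.re := by rw [hdim]; linarith
    exact (integrable_kernelMajorant volume ha (by linarith) (by norm_num) 0).add
      (integrable_kernelMajorant volume ha (by linarith) (by norm_num) e)
  refine hmaj.mono' (Measurable.aestronglyMeasurable (by fun_prop)) ?_
  filter_upwards [ae_restrict_mem (measurableSet_Ioi.prod MeasurableSet.univ)] with p hp
  exact norm_integrand_le_kernelMajorant he (by simp [hdim]) (by linarith) hp.1 p.2
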